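/- The first moment of the stable-1/2 bridge at time t is ∫₀^z u f_{tT}(u;z) du = (t/T) z, for 0<t<T, z>0. -/

import Mathlib

open MeasureTheory Real Set

set_option maxHeartbeats 1000000

noncomputable def bridgeDensity (c t T y z : ℝ) : ℝ :=
  if 0 < y ∧ y ≤ z then
    (1 / Real.sqrt (2 * Real.pi)) * (c * t * (T - t) / T) *
      Real.exp (-(c ^ 2 / 2) * (T * y - t * z) ^ 2 / (y * z * (z - y))) /
        (y - y ^ 2 / z) ^ ((3 : ℝ) / 2)
  else 0

lemma glasser (p q : ℝ) (hp : 0 < p) (hq : 0 < q) :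
    ∫ x in Set.Ioi (0:ℝ), Real.exp (-(p * x - q / x) ^ 2) = Real.sqrt Real.pi / (2 * p) := by
  -- φ : substitution y = p x - q / x
  have hderivφ : ∀ x ∈ Set.Ioi (0:ℝ),
      HasDerivWithinAt (fun x : ℝ => p * x - q / x) (p + q / x ^ 2) (Set.Ioi 0) x := by
    intro x hx
    have hx0 : x ≠ 0 := ne_of_gt hx
    have h : HasDerivAt (fun x : ℝ => p * x - q / x) (p + q / x ^ 2) x := by
      have h1 : HasDerivAt (fun x : ℝ => p * x) p x := by
        simpa using (hasDerivAt_id x).const_mul p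
      have h2 : HasDerivAt (fun x : ℝ => q / x) (q * (-(x ^ 2)⁻¹)) x := by
        simpa [div_eq_mul_inv] using (hasDerivAt_inv hx0).const_mul q
      have := h1.sub h2
      refine this.congr_deriv ?_
      ring
    exact h.hasDerivWithinAt
  have hinjφ : Set.InjOn (fun x : ℝ => p * x - q / x) (Set.Ioi 0) := by
    have hmono : StrictMonoOn (fun x : ℝ => p * x - q / x) (Set.Ioi 0) := by
      intro a ha b hb hab
      have ha0 : (0:ℝ) < a := ha
      have hb0 : (0:ℝ) < b := hb
      have h1 : q / b < q / a := div_lt_div_of_pos_left hq ha0 hab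
      have h2 : p * a < p * b := by nlinarith
      simp only
      linarith
    exact hmono.injOn
  have himgφ : (fun x : ℝ => p * x - q / x) '' Set.Ioi 0 = Set.univ := by
    apply Set.eq_univ_of_forall
    intro y
    set R := Real.sqrt (y ^ 2 + 4 * p * q) with hR
    have hR2 : R ^ 2 = y ^ 2 + 4 * p * q := Real.sq_sqrt (by nlinarith)
    have hRy : -y < R := by
      have h1 : |y| < R := by
        rw [← Real.sqrt_sq_eq_abs]
        exact Real.sqrt_lt_sqrt (sq_nonneg y) (by nlinarith)
      calc -y ≤ |y| := neg_le_abs y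
        _ < R := h1
    set x := (y + R) / (2 * p) with hxdef
    have hx0 : 0 < x := by
      apply div_pos (by linarith) (by linarith)
    refine ⟨x, hx0, ?_⟩
    have hxne : x ≠ 0 := ne_of_gt hx0
    simp only
    rw [eq_comm, ← sub_eq_zero]
    field_simp
    rw [hxdef]
    field_simp
    ring_nf
    nlinarith [hR2]
  -- ψ : substitution x ↦ q / (p x)
  have hderivψ : ∀ x ∈ Set.Ioi (0:ℝ),
      HasDerivWithinAt (fun x : ℝ => q / (p * x)) (-(q / p) / x ^ 2) (Set.Ioi 0) x := by
    intro x hx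
    have hx0 : x ≠ 0 := ne_of_gt hx
    have h : HasDerivAt (fun x : ℝ => q / (p * x)) (-(q / p) / x ^ 2) x := by
      have h2 : HasDerivAt (fun x : ℝ => (q / p) * x⁻¹) ((q / p) * (-(x ^ 2)⁻¹)) x :=
        (hasDerivAt_inv hx0).const_mul (q / p)
      have heq : (fun x : ℝ => q / (p * x)) = fun x : ℝ => (q / p) * x⁻¹ := by
        funext x; by_cases hx' : x = 0 <;> field_simp [hx']
      rw [heq]
      convert h2 using 1
      field_simp
    exact h.hasDerivWithinAt
  have hinjψ : Set.InjOn (fun x : ℝ => q / (p * x)) (Set.Ioi 0) := by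
    intro a ha b hb h
    simp only at h
    have ha0 : (0:ℝ) < a := ha
    have hb0 : (0:ℝ) < b := hb
    field_simp at h
    linarith
  have himgψ : (fun x : ℝ => q / (p * x)) '' Set.Ioi 0 = Set.Ioi 0 := by
    ext y
    constructor
    · rintro ⟨x, hx, rfl⟩
      exact div_pos hq (mul_pos hp hx)
    · intro hy
      have hy0 : (0:ℝ) < y := hy
      refine ⟨q / (p * y), div_pos hq (mul_pos hp hy0), ?_⟩
      simp only
      field_simp
  -- step A
  have hA := integral_image_eq_integral_abs_deriv_smul measurableSet_Ioi hderivψ hinjψ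
      (fun y => Real.exp (-(p * y - q / y) ^ 2))
  rw [himgψ] at hA
  have hA' : (∫ x in Set.Ioi (0:ℝ), Real.exp (-(p * x - q / x) ^ 2))
      = ∫ x in Set.Ioi (0:ℝ), (q / p / x ^ 2) * Real.exp (-(p * x - q / x) ^ 2) := by
    rw [hA]
    apply setIntegral_congr_fun measurableSet_Ioi
    intro x hx
    have hx0 : (0:ℝ) < x := hx
    have habs : |(-(q / p) / x ^ 2)| = q / p / x ^ 2 := by
      have h' : (-(q / p) / x ^ 2) = -((q / p) / x ^ 2) := by ring
      rw [h', abs_neg, abs_of_nonneg (by positivity)]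
    have harg : p * (q / (p * x)) - q / (q / (p * x)) = -(p * x - q / x) := by
      field_simp
      ring
    simp only [smul_eq_mul, harg, neg_sq, habs]
  -- step B
  have hB := integral_image_eq_integral_abs_deriv_smul measurableSet_Ioi hderivφ hinjφ
      (fun y => Real.exp (-y ^ 2))
  rw [himgφ] at hB
  have hgauss : (∫ y in (Set.univ : Set ℝ), Real.exp (-y ^ 2)) = Real.sqrt Real.pi := by
    rw [setIntegral_univ]
    simpa using integral_gaussian 1
  have hB' : (∫ x in Set.Ioi (0:ℝ), (p + q / x ^ 2) * Real.exp (-(p * x - q / x) ^ 2))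
      = Real.sqrt Real.pi := by
    rw [← hgauss, hB]
    apply setIntegral_congr_fun measurableSet_Ioi
    intro x hx
    have hx0 : (0:ℝ) < x := hx
    have habs : |p + q / x ^ 2| = p + q / x ^ 2 := abs_of_pos (by positivity)
    simp only [smul_eq_mul, habs]
  -- integrability
  have hint_total : IntegrableOn
      (fun x => (p + q / x ^ 2) * Real.exp (-(p * x - q / x) ^ 2)) (Set.Ioi (0:ℝ)) := by
    have hg0 : Integrable (fun y : ℝ => Real.exp (-y ^ 2)) := by
      simpa using integrable_exp_neg_mul_sq one_pos
    have hiff := integrableOn_image_iff_integrableOn_abs_deriv_smul measurableSet_Ioi hderivφ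
        hinjφ (fun y => Real.exp (-y ^ 2))
    rw [himgφ] at hiff
    have h1 := hiff.mp hg0.integrableOn
    apply h1.congr_fun ?_ measurableSet_Ioi
    intro x hx
    have hx0 : (0:ℝ) < x := hx
    have habs : |p + q / x ^ 2| = p + q / x ^ 2 := abs_of_pos (by positivity)
    simp only [smul_eq_mul, habs]
  have hmeas : AEStronglyMeasurable (fun x : ℝ => p * Real.exp (-(p * x - q / x) ^ 2))
      (volume.restrict (Set.Ioi (0:ℝ))) := by
    apply Measurable.aestronglyMeasurable
    fun_prop
  have hint1 : IntegrableOn (fun x => p * Real.exp (-(p * x - q / x) ^ 2)) (Set.Ioi (0:ℝ)) := by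
    apply hint_total.mono' hmeas
    filter_upwards [ae_restrict_mem measurableSet_Ioi] with x hx
    have hx0 : (0:ℝ) < x := hx
    have he : (0:ℝ) < Real.exp (-(p * x - q / x) ^ 2) := Real.exp_pos _
    rw [Real.norm_eq_abs, abs_of_pos (by positivity)]
    have : (0:ℝ) ≤ q / x ^ 2 := by positivity
    nlinarith
  have hint2 : IntegrableOn (fun x => (q / x ^ 2) * Real.exp (-(p * x - q / x) ^ 2))
      (Set.Ioi (0:ℝ)) := by
    have h3 : IntegrableOn
        ((fun x => (p + q / x ^ 2) * Real.exp (-(p * x - q / x) ^ 2))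
          - fun x => p * Real.exp (-(p * x - q / x) ^ 2)) (Set.Ioi (0:ℝ)) :=
      hint_total.sub hint1
    apply h3.congr_fun ?_ measurableSet_Ioi
    intro x hx
    simp only [Pi.sub_apply]
    ring
  have hsplit : (∫ x in Set.Ioi (0:ℝ), (p + q / x ^ 2) * Real.exp (-(p * x - q / x) ^ 2))
      = (∫ x in Set.Ioi (0:ℝ), p * Real.exp (-(p * x - q / x) ^ 2))
        + ∫ x in Set.Ioi (0:ℝ), (q / x ^ 2) * Real.exp (-(p * x - q / x) ^ 2) := by
    rw [← integral_add hint1 hint2]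
    apply setIntegral_congr_fun measurableSet_Ioi
    intro x hx
    ring
  have e1 : (∫ x in Set.Ioi (0:ℝ), p * Real.exp (-(p * x - q / x) ^ 2))
      = p * ∫ x in Set.Ioi (0:ℝ), Real.exp (-(p * x - q / x) ^ 2) :=
    MeasureTheory.integral_const_mul p _
  have e2 : (∫ x in Set.Ioi (0:ℝ), (q / x ^ 2) * Real.exp (-(p * x - q / x) ^ 2))
      = p * ∫ x in Set.Ioi (0:ℝ), (q / p / x ^ 2) * Real.exp (-(p * x - q / x) ^ 2) := by
    rw [← MeasureTheory.integral_const_mul]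
    apply setIntegral_congr_fun measurableSet_Ioi
    intro x hx
    have hx0 : (0:ℝ) < x := hx
    field_simp
  have key : 2 * p * (∫ x in Set.Ioi (0:ℝ), Real.exp (-(p * x - q / x) ^ 2))
      = Real.sqrt Real.pi := by
    rw [← hB', hsplit, e1, e2, ← hA']
    ring
  have hp2 : (2 * p) ≠ 0 := by positivity
  field_simp at key ⊢
  linarith [key]

theorem bridge_first_moment (c t T z : ℝ) (hc : 0 < c) (ht : 0 < t) (htT : t < T)
    (hz : 0 < z) :
    (∫ u in Set.Ioo (0 : ℝ) z, u * bridgeDensity c t T u z) = t / T * z := by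
  have hT : 0 < T := ht.trans htT
  have hTt : 0 < T - t := by linarith
  set s : ℝ := Real.sqrt (2 * z) with hsdef
  have hs0 : 0 < s := Real.sqrt_pos.mpr (by linarith)
  have hs2 : s ^ 2 = 2 * z := Real.sq_sqrt (by linarith)
  set p : ℝ := c * (T - t) / s with hpdef
  set q : ℝ := c * t / s with hqdef
  have hp : 0 < p := by positivity
  have hq : 0 < q := by positivity
  set C : ℝ := (1 / Real.sqrt (2 * Real.pi)) * (c * t * (T - t) / T) with hCdef
  -- the substitution map
  set f : ℝ → ℝ := fun x => z * x ^ 2 / (1 + x ^ 2) with hfdef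
  have hderiv : ∀ x ∈ Set.Ioi (0:ℝ),
      HasDerivWithinAt f (2 * z * x / (1 + x ^ 2) ^ 2) (Set.Ioi 0) x := by
    intro x hx
    have hne : (1 + x ^ 2 : ℝ) ≠ 0 := by positivity
    have h1 : HasDerivAt (fun x : ℝ => z * x ^ 2) (z * (2 * x)) x := by
      simpa using (hasDerivAt_pow 2 x).const_mul z
    have h2 : HasDerivAt (fun x : ℝ => 1 + x ^ 2) (2 * x) x := by
      simpa using (hasDerivAt_pow 2 x).const_add 1
    have h := h1.div h2 hne
    have : HasDerivAt f (2 * z * x / (1 + x ^ 2) ^ 2) x := by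
      refine h.congr_deriv ?_
      ring
    exact this.hasDerivWithinAt
  have hinj : Set.InjOn f (Set.Ioi 0) := by
    have hmono : StrictMonoOn f (Set.Ioi 0) := by
      intro a ha b hb hab
      have ha0 : (0:ℝ) < a := ha
      have hb0 : (0:ℝ) < b := hb
      have hpa : (0:ℝ) < 1 + a ^ 2 := by positivity
      have hpb : (0:ℝ) < 1 + b ^ 2 := by positivity
      simp only [hfdef]
      rw [div_lt_div_iff₀ hpa hpb]
      have h2 : a ^ 2 < b ^ 2 := by nlinarith
      nlinarith [mul_pos hz (sub_pos.mpr h2)]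
    exact hmono.injOn
  have himg : f '' Set.Ioi 0 = Set.Ioo 0 z := by
    ext u
    constructor
    · rintro ⟨x, hx, rfl⟩
      have hx0 : (0:ℝ) < x := hx
      constructor
      · positivity
      · rw [div_lt_iff₀ (by positivity)]
        nlinarith
    · rintro ⟨hu0, huz⟩
      have hzu : (0:ℝ) < z - u := by linarith
      refine ⟨Real.sqrt (u / (z - u)), Real.sqrt_pos.mpr (by positivity), ?_⟩
      have hx2 : Real.sqrt (u / (z - u)) ^ 2 = u / (z - u) := Real.sq_sqrt (by positivity)
      simp only [hfdef, hx2]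
      field_simp
      ring
  rw [← himg, integral_image_eq_integral_abs_deriv_smul measurableSet_Ioi hderiv hinj]
  have hcongr : ∀ x ∈ Set.Ioi (0:ℝ),
      |2 * z * x / (1 + x ^ 2) ^ 2| • (f x * bridgeDensity c t T (f x) z)
        = (2 * Real.sqrt z * C) * Real.exp (-(p * x - q / x) ^ 2) := by
    intro x hx
    have hx0 : (0:ℝ) < x := hx
    have hA : (0:ℝ) < 1 + x ^ 2 := by positivity
    have hu0 : 0 < f x := by simp only [hfdef]; positivity
    have huz : f x ≤ z := by
      simp only [hfdef]
      rw [div_le_iff₀ (by positivity)]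
      nlinarith
    have habs : |2 * z * x / (1 + x ^ 2) ^ 2| = 2 * z * x / (1 + x ^ 2) ^ 2 :=
      abs_of_pos (by positivity)
    rw [smul_eq_mul, habs, bridgeDensity, if_pos ⟨hu0, huz⟩, ← hCdef]
    have hsz : Real.sqrt z * Real.sqrt z = z := Real.mul_self_sqrt hz.le
    have hsz0 : 0 < Real.sqrt z := Real.sqrt_pos.mpr hz
    -- the 3/2 power part
    set d : ℝ := Real.sqrt z * x / (1 + x ^ 2) with hddef
    have hd0 : 0 < d := by positivity
    have hbase : f x - (f x) ^ 2 / z = d ^ 2 := by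
      simp only [hfdef, hddef]
      rw [show ((Real.sqrt z * x / (1 + x ^ 2)) : ℝ) ^ 2 = z * x ^ 2 / (1 + x ^ 2) ^ 2 by
        rw [div_pow, mul_pow, Real.sq_sqrt hz.le]]
      field_simp
      ring
    have hpow : (f x - (f x) ^ 2 / z) ^ ((3:ℝ)/2) = d ^ 3 := by
      rw [hbase, show (d ^ 2 : ℝ) = d ^ (2:ℕ) from rfl, ← Real.rpow_natCast d 2,
        ← Real.rpow_mul hd0.le]
      norm_num
    -- the exponent part
    set N : ℝ := (T - t) * x ^ 2 - t with hNdef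
    have hexp : -(c ^ 2 / 2) * (T * f x - t * z) ^ 2 / (f x * z * (z - f x))
        = -(p * x - q / x) ^ 2 := by
      have e1 : T * f x - t * z = z * N / (1 + x ^ 2) := by
        simp only [hfdef, hNdef]; field_simp; ring
      have e3 : f x * z * (z - f x) = z ^ 3 * x ^ 2 / (1 + x ^ 2) ^ 2 := by
        simp only [hfdef]; field_simp; ring
      have e4 : p * x - q / x = c * N / (s * x) := by
        simp only [hpdef, hqdef, hNdef]; field_simp
      have e5 : (s * x) ^ 2 = 2 * z * x ^ 2 := by rw [mul_pow, hs2]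
      rw [e1, e3, e4]
      rw [div_pow, div_pow, e5]
      field_simp
    rw [hpow, hexp]
    have h3 : d ^ 3 = z * Real.sqrt z * x ^ 3 / (1 + x ^ 2) ^ 3 := by
      simp only [hddef]
      rw [div_pow, mul_pow, pow_succ (Real.sqrt z) 2, Real.sq_sqrt hz.le]
    rw [h3]
    simp only [hfdef]
    generalize Real.exp (-(p * x - q / x) ^ 2) = E
    set w : ℝ := Real.sqrt z with hwdef
    rw [show z = w * w from hsz.symm]
    have hw0 : 0 < w := hsz0
    field_simp
  rw [setIntegral_congr_fun measurableSet_Ioi hcongr, MeasureTheory.integral_const_mul,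
    glasser p q hp hq]
  -- final algebra
  have h2pi : Real.sqrt (2 * Real.pi) = Real.sqrt 2 * Real.sqrt Real.pi :=
    Real.sqrt_mul (by norm_num) _
  have h2z : s = Real.sqrt 2 * Real.sqrt z := by rw [hsdef, Real.sqrt_mul (by norm_num)]
  have hsz : Real.sqrt z * Real.sqrt z = z := Real.mul_self_sqrt hz.le
  have hspi : (0:ℝ) < Real.sqrt Real.pi := Real.sqrt_pos.mpr Real.pi_pos
  have hsqrt2 : (0:ℝ) < Real.sqrt 2 := Real.sqrt_pos.mpr (by norm_num)
  have hszp : (0:ℝ) < Real.sqrt z := Real.sqrt_pos.mpr hz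
  rw [hCdef, hpdef, h2z, h2pi]
  set w : ℝ := Real.sqrt z with hwdef
  rw [show z = w * w from hsz.symm]
  field_simp
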